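/- Let X be a Petri curve, g ≥ 2, s ≥ 3 integers and d an integer with d < s + 2g − 4g/(s+2). Set r := ⌈(2+s)/2⌉. Then r + g − 1 − g/r > d/2 (as rational numbers). Consequently, any semistable rank-2 bundle E of degree d admits no line subbundle F with h⁰(F) ≥ r and β(1, deg F, r) ≥ 0. -/

import Mathlib

/-!
Put `r₀ = (s + 2) / 2`, so that `r₀ ≤ r`. The hypothesis on `d` says exactly that
`d / 2 < r₀ + g - 1 - g / r₀`, and `x ↦ x + g - 1 - g / x` is monotone on `x > 0` for `g ≥ 0`;
hence `d / 2 < r + g - 1 - g / r`. The last quantity is the degree below which the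
Brill–Noether number `g - r (r - 1 - e + g)` is negative, which gives the second claim.
-/

def brillNoetherThreshold (g r : ℚ) : ℚ := r + g - 1 - g / r

lemma brillNoetherThreshold_mono {g x y : ℚ} (hg : 0 ≤ g) (hx : 0 < x) (hxy : x ≤ y) :
    brillNoetherThreshold g x ≤ brillNoetherThreshold g y := by
  have : g / y ≤ g / x := div_le_div_of_nonneg_left hg hx hxy
  unfold brillNoetherThreshold
  linarith

lemma brillNoether_neg_iff {g r e : ℤ} (hr : 0 < r) :
    g - r * (r - 1 - e + g) < 0 ↔ (e : ℚ) < brillNoetherThreshold g r := by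
  have hrq : (0 : ℚ) < r := by exact_mod_cast hr
  rw [brillNoetherThreshold, ← mul_lt_mul_iff_of_pos_right hrq, sub_mul, div_mul_cancel₀ _ hrq.ne',
    ← sub_neg, ← Int.cast_lt (R := ℚ)]
  push_cast
  constructor <;> intro h <;> linarith

lemma half_lt_brillNoetherThreshold {g s d : ℚ} (hs : 0 < s + 2)
    (hd : d < s + 2 * g - 4 * g / (s + 2)) :
    d / 2 < brillNoetherThreshold g ((s + 2) / 2) := by
  have : g / ((s + 2) / 2) = 2 * g / (s + 2) := by field_simp
  rw [brillNoetherThreshold, this]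
  linarith [show 4 * g / (s + 2) = 2 * (2 * g / (s + 2)) by ring]

/-- Let g ≥ 2, s ≥ 3 and d be integers with d < s + 2g − 4g/(s+2) (in ℚ), and set
r := ⌈(2+s)/2⌉.  Then r + g − 1 − g/r > d/2 in ℚ.  Consequently, for any line
subbundle F of a semistable rank-2 degree-d bundle (so deg F ≤ d/2), the
Brill-Noether number β(1, deg F, r) = g − r(r − 1 − deg F + g) is negative, so F
cannot have h⁰(F) ≥ r on a Petri curve. -/
theorem stmt_15 (g s d : ℤ) (hg : 2 ≤ g) (hs : 3 ≤ s)
    (hd : (d : ℚ) < (s : ℚ) + 2 * g - 4 * g / (s + 2)) :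
    ((⌈((2 + s : ℚ)) / 2⌉ : ℚ) + g - 1 - (g : ℚ) / (⌈((2 + s : ℚ)) / 2⌉ : ℚ)
        > (d : ℚ) / 2) ∧
    (∀ e : ℤ, (e : ℚ) ≤ (d : ℚ) / 2 →
      g - ⌈((2 + s : ℚ)) / 2⌉ * (⌈((2 + s : ℚ)) / 2⌉ - 1 - e + g) < 0) := by
  set r : ℤ := ⌈((2 + s : ℚ)) / 2⌉
  have hs2 : (0 : ℚ) < s + 2 := by
    have : (3 : ℚ) ≤ s := by exact_mod_cast hs
    linarith
  have hg0 : (0 : ℚ) ≤ g := by exact_mod_cast (by omega : (0 : ℤ) ≤ g)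
  have hr₀ : ((s : ℚ) + 2) / 2 ≤ r := by rw [add_comm]; exact Int.le_ceil _
  have hr : 0 < r := by
    have : (0 : ℚ) < r := by linarith
    exact_mod_cast this
  have key : (d : ℚ) / 2 < brillNoetherThreshold g r :=
    (half_lt_brillNoetherThreshold hs2 hd).trans_le <|
      brillNoetherThreshold_mono hg0 (by linarith) hr₀
  exact ⟨key, fun e he => (brillNoether_neg_iff hr).2 (he.trans_lt key)⟩
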